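/- The Lie algebras 𝔤₃^α and 𝔤₃^β (with products e₁e₃ = e₁+e₂, e₂e₃ = α·e₂ resp. β·e₂, extended anticommutatively) are isomorphic as algebras whenever αβ = 1. -/
import Mathlib


/-- Anticommutative multiplication of `𝔤₃^γ` on ℂ³ (basis `e₁,e₂,e₃` = indices
`0,1,2`): `e₁e₃ = e₁ + e₂`, `e₂e₃ = γ·e₂`, extended by anticommutativity, all
other basis products zero. -/
def mulG3 (γ : ℂ) (x y : Fin 3 → ℂ) : Fin 3 → ℂ :=
  ![x 0 * y 2 - x 2 * y 0,
    (x 0 * y 2 - x 2 * y 0) + γ * (x 1 * y 2 - x 2 * y 1), 0]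

/-- If `αβ = 1` then `𝔤₃^α` and `𝔤₃^β` are isomorphic algebras. -/
theorem stmt_7 (α β : ℂ) (h : α * β = 1) :
    ∃ φ : (Fin 3 → ℂ) ≃ₗ[ℂ] (Fin 3 → ℂ),
      ∀ x y, φ (mulG3 α x y) = mulG3 β (φ x) (φ y) := by
  refine ⟨{ toFun := fun x => ![x 0 + (α - 1) * x 1, α * x 1, α * x 2],
            invFun := fun y => ![y 0 + (β - 1) * y 1, β * y 1, β * y 2],
            map_add' := ?_, map_smul' := ?_, left_inv := ?_, right_inv := ?_ }, ?_⟩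
  · intro x y
    funext i
    fin_cases i <;> simp [Pi.add_apply] <;> ring
  · intro c x
    funext i
    fin_cases i <;> simp [Pi.smul_apply, smul_eq_mul] <;> ring
  · intro x
    funext i
    fin_cases i <;> simp <;>
      (first | linear_combination (x 1 : ℂ) * h | linear_combination (x 2 : ℂ) * h)
  · intro y
    funext i
    fin_cases i <;> simp <;>
      (first | linear_combination (y 1 : ℂ) * h | linear_combination (y 2 : ℂ) * h)
  · intro x y
    funext i
    fin_cases i <;>
      simp [mulG3] <;>
      (first
        | linear_combination (-(α * (x 1 * y 2 - x 2 * y 1)) : ℂ) * h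
        | linear_combination (-(2 * α * (x 1 * y 2 - x 2 * y 1)) : ℂ) * h
        | linear_combination ((2 * α * (x 1 * y 2 - x 2 * y 1)) : ℂ) * h
        | linear_combination ((α * (x 1 * y 2 - x 2 * y 1)) : ℂ) * h
        | ring)
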